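/- Let G be a finite group, π a set of primes, N a normal π-subgroup of G, and x a π-element of G. Then |C_G(x)_π| / |G_π| ≤ |C_{G/N}(xN)_π| / |(G/N)_π|, where for any group H, H_π denotes the set of π-elements of H and C denotes centralizers. -/

import Mathlib

/-! Since `N` is a `π`-group, an element of `G` is a `π`-element exactly when its image in `G/N`
is one, so `G_π` is the full preimage of `(G/N)_π` and has `|N| · |(G/N)_π|` elements. The
`π`-elements centralizing `x` map into `C_{G/N}(xN)_π`, so there are at most
`|N| · |C_{G/N}(xN)_π|` of them. Dividing the two counts gives the inequality. -/

def IsPiElement {M : Type*} [Monoid M] (π : Set ℕ) (g : M) : Prop :=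
  ∀ q : ℕ, q.Prime → q ∣ orderOf g → q ∈ π

theorem IsPiElement.map {M H : Type*} [Monoid M] [Monoid H] {π : Set ℕ} {g : M}
    (hg : IsPiElement π g) (f : M →* H) : IsPiElement π (f g) :=
  fun q hq hdvd => hg q hq (hdvd.trans (orderOf_map_dvd f g))

namespace QuotientGroup

variable {G : Type*} [Group G] {π : Set ℕ} (N : Subgroup G) [N.Normal]

theorem isPiElement_mk_iff (hN : ∀ n ∈ N, IsPiElement π n) (g : G) :
    IsPiElement π (g : G ⧸ N) ↔ IsPiElement π g := by
  refine ⟨fun h q hq hdvd => ?_, fun h => h.map (mk' N)⟩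
  set k := orderOf (g : G ⧸ N)
  have hgk : g ^ k ∈ N := by
    rw [← eq_one_iff, mk_pow, pow_orderOf_eq_one]
  have hdvd_mul : orderOf g ∣ k * orderOf (g ^ k) :=
    orderOf_dvd_of_pow_eq_one (by rw [pow_mul, pow_orderOf_eq_one])
  rcases hq.dvd_mul.mp (hdvd.trans hdvd_mul) with hk | hm
  · exact h q hq hk
  · exact hN _ hgk q hq hm

theorem preimage_mk_setOf_isPiElement (hN : ∀ n ∈ N, IsPiElement π n) :
    mk ⁻¹' {y : G ⧸ N | IsPiElement π y} = {g : G | IsPiElement π g} :=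
  Set.ext (isPiElement_mk_iff N hN)

theorem card_setOf_isPiElement (hN : ∀ n ∈ N, IsPiElement π n) :
    Nat.card {g : G | IsPiElement π g} = Nat.card N * Nat.card {y : G ⧸ N | IsPiElement π y} := by
  rw [← card_preimage_mk, preimage_mk_setOf_isPiElement N hN]

theorem card_commute_isPiElement_le [Finite G] (hN : ∀ n ∈ N, IsPiElement π n) (x : G) :
    Nat.card {y : G | Commute x y ∧ IsPiElement π y}
      ≤ Nat.card N * Nat.card {y : G ⧸ N | Commute (x : G ⧸ N) y ∧ IsPiElement π y} := by
  rw [← card_preimage_mk]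
  refine Nat.card_mono (Set.toFinite _) fun y ⟨hxy, hy⟩ => ?_
  exact ⟨hxy.map (mk' N), (isPiElement_mk_iff N hN y).mpr hy⟩

end QuotientGroup

open QuotientGroup in
theorem centralizer_pi_ratio_le_quotient_general {G : Type*} [Group G] [Finite G] (π : Set ℕ)
    (N : Subgroup G) [N.Normal]
    (hN : ∀ n ∈ N, ∀ q : ℕ, q.Prime → q ∣ orderOf n → q ∈ π)
    (x : G) :
    (Nat.card {y : G | Commute x y ∧ ∀ q : ℕ, q.Prime → q ∣ orderOf y → q ∈ π} : ℝ)
        / (Nat.card {g : G | ∀ q : ℕ, q.Prime → q ∣ orderOf g → q ∈ π} : ℝ)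
      ≤ (Nat.card {y : G ⧸ N |
            Commute ((x : G ⧸ N)) y ∧ ∀ q : ℕ, q.Prime → q ∣ orderOf y → q ∈ π} : ℝ)
        / (Nat.card {g : G ⧸ N | ∀ q : ℕ, q.Prime → q ∣ orderOf g → q ∈ π} : ℝ) := by
  change (Nat.card {y : G | Commute x y ∧ IsPiElement π y} : ℝ) / Nat.card {g : G | IsPiElement π g}
    ≤ (Nat.card {y : G ⧸ N | Commute (x : G ⧸ N) y ∧ IsPiElement π y} : ℝ)
      / Nat.card {y : G ⧸ N | IsPiElement π y}
  rw [card_setOf_isPiElement N hN, Nat.cast_mul, ← div_div]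
  refine div_le_div_of_nonneg_right ?_ (Nat.cast_nonneg _)
  rw [div_le_iff₀' (Nat.cast_pos.mpr Nat.card_pos)]
  exact_mod_cast card_commute_isPiElement_le N hN x

/-- For a normal `π`-subgroup `N` of a finite group `G` and a `π`-element `x`,
the proportion of `π`-elements of `G` centralizing `x` is at most the
corresponding proportion in `G/N` for `xN`. -/
theorem centralizer_pi_ratio_le_quotient {G : Type*} [Group G] [Finite G] (π : Set ℕ)
    (hπ : ∀ q ∈ π, Nat.Prime q) (N : Subgroup G) [N.Normal]
    (hN : ∀ n ∈ N, ∀ q : ℕ, q.Prime → q ∣ orderOf n → q ∈ π)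
    (x : G) (hx : ∀ q : ℕ, q.Prime → q ∣ orderOf x → q ∈ π) :
    (Nat.card {y : G | Commute x y ∧ ∀ q : ℕ, q.Prime → q ∣ orderOf y → q ∈ π} : ℝ)
        / (Nat.card {g : G | ∀ q : ℕ, q.Prime → q ∣ orderOf g → q ∈ π} : ℝ)
      ≤ (Nat.card {y : G ⧸ N |
            Commute ((x : G ⧸ N)) y ∧ ∀ q : ℕ, q.Prime → q ∣ orderOf y → q ∈ π} : ℝ)
        / (Nat.card {g : G ⧸ N | ∀ q : ℕ, q.Prime → q ∣ orderOf g → q ∈ π} : ℝ) :=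
  centralizer_pi_ratio_le_quotient_general π N hN x
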